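/- arXiv:0907.1183 — 3 statements merged into one kernel-verified Lean document; each statement's English description precedes it below -/
import Mathlib

section
/- If ω₁ and ω₂ are Fourier forms on a coalgebra C with associated Fourier products ⋆₁ and ⋆₂, then the two products associate: x ⋆₁ (y ⋆₂ z) = (x ⋆₁ y) ⋆₂ z for all x, y, z ∈ C. -/
open TensorProduct Coalgebra

variable {C : Type*} [AddCommGroup C] [Module ℂ C] [Coalgebra ℂ C]

/-- The Fourier product associated to a bilinear form `ω`:
`c ⋆ d = Σ ω(c, d₁) d₂`. -/
noncomputable def fourierStar (ω : C →ₗ[ℂ] C →ₗ[ℂ] ℂ) (c d : C) : C :=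
  TensorProduct.lid ℂ C ((LinearMap.rTensor C (ω c)) (Coalgebra.comul (R := ℂ) d))

/-- `ω` is a Fourier form: `Σ ω(c, d₁) d₂ = Σ c₁ ω(c₂, d)` for all `c, d`. -/
def IsFourierForm (ω : C →ₗ[ℂ] C →ₗ[ℂ] ℂ) : Prop :=
  ∀ c d : C,
    TensorProduct.lid ℂ C ((LinearMap.rTensor C (ω c)) (Coalgebra.comul (R := ℂ) d)) =
    TensorProduct.rid ℂ C ((LinearMap.lTensor C (ω.flip d)) (Coalgebra.comul (R := ℂ) c))

lemma comul_rid_lTensor (f : C →ₗ[ℂ] ℂ) (t : C ⊗[ℂ] C) :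
    Coalgebra.comul (R := ℂ)
        (TensorProduct.rid ℂ C (LinearMap.lTensor C f t)) =
      TensorProduct.rid ℂ (C ⊗[ℂ] C)
        (LinearMap.lTensor (C ⊗[ℂ] C) f
          (LinearMap.rTensor C (Coalgebra.comul (R := ℂ)) t)) := by
  induction t with
  | zero => simp
  | tmul a b => simp
  | add u v hu hv => simp [map_add, hu, hv]

lemma comul_lid_rTensor (g : C →ₗ[ℂ] ℂ) (t : C ⊗[ℂ] C) :
    Coalgebra.comul (R := ℂ)
        (TensorProduct.lid ℂ C (LinearMap.rTensor C g t)) =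
      TensorProduct.lid ℂ (C ⊗[ℂ] C)
        (LinearMap.rTensor (C ⊗[ℂ] C) g
          (LinearMap.lTensor C (Coalgebra.comul (R := ℂ)) t)) := by
  induction t with
  | zero => simp
  | tmul a b => simp
  | add u v hu hv => simp [map_add, hu, hv]

lemma key_swap (f g : C →ₗ[ℂ] ℂ) (t : C ⊗[ℂ] (C ⊗[ℂ] C)) :
    TensorProduct.lid ℂ C (LinearMap.rTensor C g
      (TensorProduct.rid ℂ (C ⊗[ℂ] C) (LinearMap.lTensor (C ⊗[ℂ] C) f
        ((TensorProduct.assoc ℂ C C C).symm t)))) =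
    TensorProduct.rid ℂ C (LinearMap.lTensor C f
      (TensorProduct.lid ℂ (C ⊗[ℂ] C) (LinearMap.rTensor (C ⊗[ℂ] C) g t))) := by
  induction t with
  | zero => simp
  | tmul a u =>
    induction u with
    | zero => simp
    | tmul b c => simp [smul_tmul', smul_smul, mul_comm]
    | add u v hu hv => simp only [tmul_add, map_add, hu, hv]
  | add u v hu hv => simp [map_add, hu, hv]

lemma star_comm (f g : C →ₗ[ℂ] ℂ) (y : C) :
    TensorProduct.lid ℂ C (LinearMap.rTensor C g (Coalgebra.comul (R := ℂ)
      (TensorProduct.rid ℂ C (LinearMap.lTensor C f (Coalgebra.comul (R := ℂ) y))))) =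
    TensorProduct.rid ℂ C (LinearMap.lTensor C f (Coalgebra.comul (R := ℂ)
      (TensorProduct.lid ℂ C (LinearMap.rTensor C g (Coalgebra.comul (R := ℂ) y))))) := by
  rw [comul_rid_lTensor, comul_lid_rTensor,
    ← Coalgebra.coassoc_symm_apply (R := ℂ) y, key_swap]

/-- two Fourier products associate: `x ⋆₁ (y ⋆₂ z) = (x ⋆₁ y) ⋆₂ z`. -/
theorem fourierStar_assoc (ω₁ ω₂ : C →ₗ[ℂ] C →ₗ[ℂ] ℂ)
    (h₁ : IsFourierForm ω₁) (h₂ : IsFourierForm ω₂) :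
    ∀ x y z : C, fourierStar ω₁ x (fourierStar ω₂ y z) =
      fourierStar ω₂ (fourierStar ω₁ x y) z := by
  intro x y z
  unfold fourierStar
  rw [h₂ y z, h₂ (TensorProduct.lid ℂ C
    ((LinearMap.rTensor C (ω₁ x)) (Coalgebra.comul (R := ℂ) y))) z]
  exact star_comm (ω₂.flip z) (ω₁ x) y
end

section
/- If ⋆ is a Fourier product in a coalgebra C, L is a left coideal of C and R is a right coideal of C, then R ⋆ L ⊆ R ∩ L. Consequently, if D and E are two distinct simple subcoalgebras of C, then D ⋆ E = 0. -/
open TensorProduct Coalgebra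

variable {C : Type*} [AddCommGroup C] [Module ℂ C] [Coalgebra ℂ C]

/-- `m` is a Fourier product: `Δ(c ⋆ d) = Σ (c ⋆ d₁) ⊗ d₂ = Σ c₁ ⊗ (c₂ ⋆ d)`. -/
def IsFourierProduct (m : C →ₗ[ℂ] C →ₗ[ℂ] C) : Prop :=
  ∀ c d : C,
    Coalgebra.comul (R := ℂ) (m c d) =
      LinearMap.rTensor C (m c) (Coalgebra.comul (R := ℂ) d) ∧
    Coalgebra.comul (R := ℂ) (m c d) =
      LinearMap.lTensor C (m.flip d) (Coalgebra.comul (R := ℂ) c)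

/-- `R` is a right coideal: `Δ(R) ⊆ R ⊗ C`. -/
def IsRightCoideal (R : Submodule ℂ C) : Prop :=
  ∀ x ∈ R, Coalgebra.comul (R := ℂ) x ∈ LinearMap.range (LinearMap.rTensor C R.subtype)

/-- `L` is a left coideal: `Δ(L) ⊆ C ⊗ L`. -/
def IsLeftCoideal (L : Submodule ℂ C) : Prop :=
  ∀ x ∈ L, Coalgebra.comul (R := ℂ) x ∈ LinearMap.range (LinearMap.lTensor C L.subtype)

/-- `D` is a subcoalgebra: `Δ(D) ⊆ D ⊗ D`. -/
def IsSubcoalgebra (D : Submodule ℂ C) : Prop :=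
  ∀ x ∈ D, Coalgebra.comul (R := ℂ) x ∈
    LinearMap.range (TensorProduct.map D.subtype D.subtype)

/-- `D` is a simple subcoalgebra: a minimal nonzero subcoalgebra. -/
def IsSimpleSubcoalgebra (D : Submodule ℂ C) : Prop :=
  IsSubcoalgebra D ∧ D ≠ ⊥ ∧ ∀ D' : Submodule ℂ C, D' ≤ D → IsSubcoalgebra D' → D' = ⊥ ∨ D' = D

/-!
Applying the counit to the second leg of `Δ(x ⋆ y) = Σ x₁ ⊗ (x₂ ⋆ y)` gives
`x ⋆ y = Σ x₁ ε(x₂ ⋆ y)`, which lies in `R` as soon as `Δx ∈ R ⊗ C`; symmetrically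
`x ⋆ y = Σ ε(x ⋆ y₁) y₂` lies in `L`. Since tensoring over a field is exact,
`(D ∩ E) ⊗ C = (D ⊗ C) ∩ (E ⊗ C)` and `F ⊗ F = (F ⊗ C) ∩ (C ⊗ F)`. Hence subcoalgebras are exactly
the two-sided coideals, the intersection of two subcoalgebras is one, and two distinct simple
subcoalgebras meet in `0`, which contains `D ⋆ E ⊆ D ∩ E`.
-/

namespace LinearMap

variable {R M N P Q : Type*} [CommRing R] [AddCommGroup M] [AddCommGroup N] [AddCommGroup P]
  [AddCommGroup Q] [Module R M] [Module R N] [Module R P] [Module R Q]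

theorem ker_rTensor_eq_range_rTensor_subtype [Module.Flat R Q] (f : M →ₗ[R] P) :
    ker (f.rTensor Q) = range ((ker f).subtype.rTensor Q) :=
  exact_iff.mp (Module.Flat.rTensor_exact Q (exact_subtype_ker_map f))

theorem range_rTensor_subtype_eq_ker_rTensor_mkQ [Module.Flat R Q] (S : Submodule R M) :
    range (S.subtype.rTensor Q) = ker (S.mkQ.rTensor Q) := by
  rw [ker_rTensor_eq_range_rTensor_subtype, Submodule.ker_mkQ]

theorem ker_rTensor_prod (f : M →ₗ[R] N) (g : M →ₗ[R] P) :
    ker ((f.prod g).rTensor Q) = ker (f.rTensor Q) ⊓ ker (g.rTensor Q) := by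
  have hprod : (prodLeft R R N P Q).toLinearMap ∘ₗ (f.prod g).rTensor Q =
      (f.rTensor Q).prod (g.rTensor Q) := by
    ext <;> simp
  rw [← ker_prod, ← hprod, LinearEquiv.ker_comp]

theorem range_lTensor_eq_map_comm (f : N →ₗ[R] P) :
    range (f.lTensor M) = (range (f.rTensor M)).map (TensorProduct.comm R P M).toLinearMap := by
  rw [← range_comp, ← lTensor_comp_comm, range_comp_of_range_eq_top _ (LinearEquiv.range _)]

theorem range_rTensor_subtype_inf [Module.Flat R Q] (S T : Submodule R M) :
    range ((S ⊓ T).subtype.rTensor Q) =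
      range (S.subtype.rTensor Q) ⊓ range (T.subtype.rTensor Q) := by
  rw [range_rTensor_subtype_eq_ker_rTensor_mkQ S, range_rTensor_subtype_eq_ker_rTensor_mkQ T,
    ← ker_rTensor_prod, ker_rTensor_eq_range_rTensor_subtype, ker_prod, Submodule.ker_mkQ,
    Submodule.ker_mkQ]

theorem range_lTensor_subtype_inf [Module.Flat R M] (S T : Submodule R Q) :
    range ((S ⊓ T).subtype.lTensor M) =
      range (S.subtype.lTensor M) ⊓ range (T.subtype.lTensor M) := by
  simp only [range_lTensor_eq_map_comm, range_rTensor_subtype_inf,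
    Submodule.map_inf _ (TensorProduct.comm R Q M).injective]

theorem range_map_subtype_eq_inf (S : Submodule R M) (T : Submodule R Q) [Module.Flat R M]
    [Module.Flat R S] [Module.Flat R (Q ⧸ T)] :
    range (map S.subtype T.subtype) =
      range (S.subtype.rTensor Q) ⊓ range (T.subtype.lTensor M) := by
  refine le_antisymm (le_inf ?_ ?_) ?_
  · rw [← rTensor_comp_lTensor]
    exact range_comp_le_range _ _
  · rw [← lTensor_comp_rTensor]
    exact range_comp_le_range _ _
  · rintro u ⟨⟨t, rfl⟩, hu⟩
    have hu₀ : (S.subtype.rTensor Q) t ∈ ker (T.mkQ.lTensor M) :=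
      (Module.Flat.lTensor_exact M (exact_subtype_mkQ T) _).mpr hu
    -- `T.mkQ` and `S.subtype` act on different factors, so they commute.
    have ht₀ : T.mkQ.lTensor S t = 0 := by
      apply Module.Flat.rTensor_preserves_injective_linearMap (M := Q ⧸ T) _ S.injective_subtype
      rw [map_zero, ← comp_apply, rTensor_comp_lTensor, ← lTensor_comp_rTensor]
      exact hu₀
    obtain ⟨s, rfl⟩ := (Module.Flat.lTensor_exact S (exact_subtype_mkQ T) t).mp ht₀
    exact ⟨s, by rw [← rTensor_comp_lTensor]; rfl⟩

theorem rid_lTensor_mem_of_mem_range_rTensor (S : Submodule R M) (g : Q →ₗ[R] R)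
    {u : M ⊗[R] Q} (hu : u ∈ range (S.subtype.rTensor Q)) :
    TensorProduct.rid R M (g.lTensor M u) ∈ S := by
  obtain ⟨t, rfl⟩ := hu
  induction t with
  | zero => simp
  | tmul s q => simpa using S.smul_mem (g q) s.2
  | add a b ha hb => simpa using S.add_mem ha hb

theorem lid_rTensor_mem_of_mem_range_lTensor (T : Submodule R Q) (g : M →ₗ[R] R)
    {u : M ⊗[R] Q} (hu : u ∈ range (T.subtype.lTensor M)) :
    TensorProduct.lid R Q (g.rTensor Q u) ∈ T := by
  obtain ⟨t, rfl⟩ := hu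
  induction t with
  | zero => simp
  | tmul m t => simpa using T.smul_mem (g m) t.2
  | add a b ha hb => simpa using T.add_mem ha hb

end LinearMap

section Coalgebra

open LinearMap

theorem IsFourierProduct.apply_mem_of_isRightCoideal {m : C →ₗ[ℂ] C →ₗ[ℂ] C}
    (hm : IsFourierProduct m) {R : Submodule ℂ C} (hR : IsRightCoideal R) {x : C} (hx : x ∈ R)
    (y : C) : m x y ∈ R := by
  have hxy : m x y = TensorProduct.rid ℂ C ((counit ∘ₗ m.flip y).lTensor C (comul x)) := by
    rw [lTensor_comp, comp_apply, ← (hm x y).2, Coalgebra.lTensor_counit_comul, rid_tmul,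
      one_smul]
  rw [hxy]
  exact rid_lTensor_mem_of_mem_range_rTensor R _ (hR x hx)

theorem IsFourierProduct.apply_mem_of_isLeftCoideal {m : C →ₗ[ℂ] C →ₗ[ℂ] C}
    (hm : IsFourierProduct m) {L : Submodule ℂ C} (hL : IsLeftCoideal L) (x : C) {y : C}
    (hy : y ∈ L) : m x y ∈ L := by
  have hxy : m x y = TensorProduct.lid ℂ C ((counit ∘ₗ m x).rTensor C (comul y)) := by
    rw [rTensor_comp, comp_apply, ← (hm x y).1, Coalgebra.rTensor_counit_comul, lid_tmul,
      one_smul]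
  rw [hxy]
  exact lid_rTensor_mem_of_mem_range_lTensor L _ (hL y hy)

theorem isSubcoalgebra_iff {D : Submodule ℂ C} :
    IsSubcoalgebra D ↔ IsRightCoideal D ∧ IsLeftCoideal D := by
  simp only [IsSubcoalgebra, IsRightCoideal, IsLeftCoideal, range_map_subtype_eq_inf,
    Submodule.mem_inf, imp_and, forall_and]

theorem IsRightCoideal.inf {S T : Submodule ℂ C} (hS : IsRightCoideal S) (hT : IsRightCoideal T) :
    IsRightCoideal (S ⊓ T) := fun x hx => by
  rw [range_rTensor_subtype_inf]
  exact ⟨hS x hx.1, hT x hx.2⟩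

theorem IsLeftCoideal.inf {S T : Submodule ℂ C} (hS : IsLeftCoideal S) (hT : IsLeftCoideal T) :
    IsLeftCoideal (S ⊓ T) := fun x hx => by
  rw [range_lTensor_subtype_inf]
  exact ⟨hS x hx.1, hT x hx.2⟩

theorem IsSubcoalgebra.inf {D E : Submodule ℂ C} (hD : IsSubcoalgebra D) (hE : IsSubcoalgebra E) :
    IsSubcoalgebra (D ⊓ E) := by
  rw [isSubcoalgebra_iff] at hD hE ⊢
  exact ⟨hD.1.inf hE.1, hD.2.inf hE.2⟩

theorem IsSimpleSubcoalgebra.inf_eq_bot {D E : Submodule ℂ C} (hD : IsSimpleSubcoalgebra D)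
    (hE : IsSimpleSubcoalgebra E) (hne : D ≠ E) : D ⊓ E = ⊥ := by
  refine (hD.2.2 _ inf_le_left (hD.1.inf hE.1)).resolve_right fun hDE => ?_
  exact (hE.2.2 D (inf_eq_left.mp hDE) hD.1).elim hD.2.1 hne

end Coalgebra

/-- for a Fourier product `⋆`, a right coideal `R` and a left coideal `L`,
`R ⋆ L ⊆ R ∩ L`; consequently two distinct simple subcoalgebras satisfy `D ⋆ E = 0`. -/
theorem fourierProduct_coideal_inter (m : C →ₗ[ℂ] C →ₗ[ℂ] C) (hm : IsFourierProduct m) :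
    (∀ (R L : Submodule ℂ C), IsRightCoideal R → IsLeftCoideal L →
      ∀ x ∈ R, ∀ y ∈ L, m x y ∈ R ⊓ L) ∧
    (∀ (D E : Submodule ℂ C), IsSimpleSubcoalgebra D → IsSimpleSubcoalgebra E → D ≠ E →
      ∀ x ∈ D, ∀ y ∈ E, m x y = 0) := by
  have coideal_inter (R L : Submodule ℂ C) (hR : IsRightCoideal R) (hL : IsLeftCoideal L) :
      ∀ x ∈ R, ∀ y ∈ L, m x y ∈ R ⊓ L := fun x hx y hy =>
    ⟨hm.apply_mem_of_isRightCoideal hR hx y, hm.apply_mem_of_isLeftCoideal hL x hy⟩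
  refine ⟨coideal_inter, fun D E hD hE hne x hx y hy => ?_⟩
  have hxy := coideal_inter D E (isSubcoalgebra_iff.mp hD.1).1 (isSubcoalgebra_iff.mp hE.1).2
    x hx y hy
  rwa [hD.inf_eq_bot hE hne, Submodule.mem_bot] at hxy
end

section
/- On a ∘-coalgebra C there is a bijective correspondence between Fourier forms ω and unitary sesquilinear forms ⟨·,·⟩ on C (viewed as a right C-comodule), given by ⟨c, d⟩_ω = ω(d∘, c) and ω(c, d) = ⟨d, c∘⟩. Under this correspondence, positive definite hermitian Fourier forms correspond to unitary inner products. -/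
open TensorProduct Coalgebra

variable {C : Type*} [AddCommGroup C] [Module ℂ C] [Coalgebra ℂ C]

/-- `ω` is bilinear. -/
def IsBilin (ω : C → C → ℂ) : Prop :=
  (∀ c c' d : C, ω (c + c') d = ω c d + ω c' d) ∧
  (∀ (a : ℂ) (c d : C), ω (a • c) d = a * ω c d) ∧
  (∀ c d d' : C, ω c (d + d') = ω c d + ω c d') ∧
  (∀ (a : ℂ) (c d : C), ω c (a • d) = a * ω c d)

/-- `β` is sesquilinear: linear in the first slot, conjugate-linear in the second. -/
def IsSesqui (β : C → C → ℂ) : Prop :=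
  (∀ c c' d : C, β (c + c') d = β c d + β c' d) ∧
  (∀ (a : ℂ) (c d : C), β (a • c) d = a * β c d) ∧
  (∀ c d d' : C, β c (d + d') = β c d + β c d') ∧
  (∀ (a : ℂ) (c d : C), β c (a • d) = (starRingEnd ℂ) a * β c d)

/-- `ω` is a Fourier form: `Σ ω(c, d₁) d₂ = Σ c₁ ω(c₂, d)` (Sweedler notation). -/
def IsFourierFormFn (ω : C → C → ℂ) : Prop :=
  ∀ (c d : C) (ι₁ : Type) (s₁ : Finset ι₁) (l₁ r₁ : ι₁ → C),
    Coalgebra.comul (R := ℂ) c = ∑ i ∈ s₁, l₁ i ⊗ₜ[ℂ] r₁ i →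
    ∀ (ι₂ : Type) (s₂ : Finset ι₂) (l₂ r₂ : ι₂ → C),
      Coalgebra.comul (R := ℂ) d = ∑ j ∈ s₂, l₂ j ⊗ₜ[ℂ] r₂ j →
      ∑ j ∈ s₂, ω c (l₂ j) • r₂ j = ∑ i ∈ s₁, ω (r₁ i) d • l₁ i

/-- `β` is unitary on the right `C`-comodule `C` (coaction `Δ`):
`Σ ⟨c₁, d⟩ c₂ = Σ ⟨c, d₁⟩ d₂∘`. -/
def IsUnitaryOnC (circ : C → C) (β : C → C → ℂ) : Prop :=
  ∀ (c d : C) (ι₁ : Type) (s₁ : Finset ι₁) (l₁ r₁ : ι₁ → C),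
    Coalgebra.comul (R := ℂ) c = ∑ i ∈ s₁, l₁ i ⊗ₜ[ℂ] r₁ i →
    ∀ (ι₂ : Type) (s₂ : Finset ι₂) (l₂ r₂ : ι₂ → C),
      Coalgebra.comul (R := ℂ) d = ∑ j ∈ s₂, l₂ j ⊗ₜ[ℂ] r₂ j →
      ∑ i ∈ s₁, β (l₁ i) d • r₁ i = ∑ j ∈ s₂, β c (l₂ j) • circ (r₂ j)

/-- `ω` is positive definite and hermitian (with respect to `∘`). -/
def IsPosDefHermitian (circ : C → C) (ω : C → C → ℂ) : Prop :=
  (∀ c : C, c ≠ 0 → 0 < (ω (circ c) c).re ∧ (ω (circ c) c).im = 0) ∧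
  (∀ c d : C, ω (circ c) (circ d) = (starRingEnd ℂ) (ω d c))

/-- `β` is an inner product: hermitian and positive definite. -/
def IsInnerProduct (β : C → C → ℂ) : Prop :=
  (∀ c d : C, β d c = (starRingEnd ℂ) (β c d)) ∧
  (∀ c : C, c ≠ 0 → 0 < (β c c).re ∧ (β c c).im = 0)

/-!
The two correspondences only substitute `d ↦ d∘` in one slot. Since `∘` is an additive,
conjugate-linear involution, this swaps bilinear and sesquilinear forms and the two maps are
mutually inverse; since `∘` reverses `Δ`, the Fourier identity for the pair `(d∘, c)` is
literally the unitarity identity for `(c, d)`, and conversely.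
-/

/-- `Δ(x∘) = Σ x₂∘ ⊗ x₁∘`, tested on Sweedler representations indexed in `Type`, as in
`IsFourierFormFn` and `IsUnitaryOnC`. -/
def IsComulReversing (circ : C → C) : Prop :=
  ∀ (x : C) (ι : Type) (s : Finset ι) (l r : ι → C),
    Coalgebra.comul (R := ℂ) x = ∑ i ∈ s, l i ⊗ₜ[ℂ] r i →
    Coalgebra.comul (R := ℂ) (circ x) = ∑ i ∈ s, circ (r i) ⊗ₜ[ℂ] circ (l i)

section

variable {circ : C → C}

theorem isComulReversing_of_repr
    (hcanti : ∀ (x : C) {ι : Type*} (r : Coalgebra.Repr ℂ x ι),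
      Coalgebra.comul (R := ℂ) (circ x) =
        ∑ i ∈ r.index, circ (r.right i) ⊗ₜ[ℂ] circ (r.left i)) :
    IsComulReversing circ := by
  intro x ι s l r hx
  -- `hcanti` speaks about index types in a fixed universe: transport `s` there along `ULift`.
  have hrepr : ∑ i ∈ s.map Equiv.ulift.symm.toEmbedding,
      (l ∘ ULift.down) i ⊗ₜ[ℂ] (r ∘ ULift.down) i = Coalgebra.comul (R := ℂ) x := by
    rw [Finset.sum_map, hx]
    rfl
  simpa [Finset.sum_map] using hcanti x ⟨_, _, _, hrepr⟩

omit [Coalgebra ℂ C] in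
theorem IsBilin.isSesqui_circ
    (hcadd : ∀ x y : C, circ (x + y) = circ x + circ y)
    (hcsmul : ∀ (a : ℂ) (x : C), circ (a • x) = (starRingEnd ℂ) a • circ x)
    {ω : C → C → ℂ} (hω : IsBilin ω) :
    IsSesqui (fun c d => ω (circ d) c) := by
  obtain ⟨hadd_left, hsmul_left, hadd_right, hsmul_right⟩ := hω
  refine ⟨fun c c' d => hadd_right (circ d) c c', fun a c d => hsmul_right a (circ d) c,
    fun c d d' => ?_, fun a c d => ?_⟩
  · simp only [hcadd, hadd_left]
  · simp only [hcsmul, hsmul_left]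

omit [Coalgebra ℂ C] in
theorem IsSesqui.isBilin_circ
    (hcadd : ∀ x y : C, circ (x + y) = circ x + circ y)
    (hcsmul : ∀ (a : ℂ) (x : C), circ (a • x) = (starRingEnd ℂ) a • circ x)
    {β : C → C → ℂ} (hβ : IsSesqui β) :
    IsBilin (fun c d => β d (circ c)) := by
  obtain ⟨hadd_left, hsmul_left, hadd_right, hsmul_right⟩ := hβ
  refine ⟨fun c c' d => ?_, fun a c d => ?_,
    fun c d d' => hadd_left d d' (circ c), fun a c d => hsmul_left a d (circ c)⟩
  · simp only [hcadd, hadd_right]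
  · simp only [hcsmul, hsmul_right, Complex.conj_conj]

theorem IsFourierFormFn.isUnitaryOnC_circ (hΔ : IsComulReversing circ)
    {ω : C → C → ℂ} (hω : IsFourierFormFn ω) :
    IsUnitaryOnC circ (fun c d => ω (circ d) c) :=
  fun c d _ s₁ l₁ r₁ hc _ s₂ l₂ r₂ hd =>
    hω (circ d) c _ s₂ _ _ (hΔ d _ s₂ l₂ r₂ hd) _ s₁ l₁ r₁ hc

theorem IsUnitaryOnC.isFourierFormFn_circ (hcinvol : ∀ x : C, circ (circ x) = x)
    (hΔ : IsComulReversing circ) {β : C → C → ℂ} (hβ : IsUnitaryOnC circ β) :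
    IsFourierFormFn (fun c d => β d (circ c)) := by
  intro c d _ s₁ l₁ r₁ hc _ s₂ l₂ r₂ hd
  simpa only [hcinvol] using hβ d (circ c) _ s₂ l₂ r₂ hd _ s₁ _ _ (hΔ c _ s₁ l₁ r₁ hc)

omit [Module ℂ C] [Coalgebra ℂ C] in
theorem isPosDefHermitian_iff_isInnerProduct (hcinvol : ∀ x : C, circ (circ x) = x)
    (ω : C → C → ℂ) :
    IsPosDefHermitian circ ω ↔ IsInnerProduct (fun c d => ω (circ d) c) := by
  have hherm_iff : (∀ c d : C, ω (circ c) (circ d) = (starRingEnd ℂ) (ω d c)) ↔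
      ∀ c d : C, ω (circ c) d = (starRingEnd ℂ) (ω (circ d) c) :=
    ⟨fun h c d => by simpa only [hcinvol] using h c (circ d),
      fun h c d => by simpa only [hcinvol] using h c (circ d)⟩
  rw [IsPosDefHermitian, IsInnerProduct, hherm_iff, and_comm]

end

/-- on a ∘-coalgebra there is a bijective correspondence between Fourier
forms and unitary sesquilinear forms, `⟨c,d⟩_ω = ω(d∘, c)`, `ω(c,d) = ⟨d, c∘⟩`; positive
definite hermitian Fourier forms correspond to unitary inner products. -/
theorem fourier_unitary_correspondence
    (circ : C → C)
    (hcadd : ∀ x y : C, circ (x + y) = circ x + circ y)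
    (hcsmul : ∀ (a : ℂ) (x : C), circ (a • x) = (starRingEnd ℂ) a • circ x)
    (hcinvol : ∀ x : C, circ (circ x) = x)
    (hcanti : ∀ (x : C) {ι : Type*} (r : Coalgebra.Repr ℂ x ι),
      Coalgebra.comul (R := ℂ) (circ x) =
        ∑ i ∈ r.index, circ (r.right i) ⊗ₜ[ℂ] circ (r.left i)) :
    (∀ ω : C → C → ℂ, IsBilin ω → IsFourierFormFn ω →
      IsSesqui (fun c d => ω (circ d) c) ∧ IsUnitaryOnC circ (fun c d => ω (circ d) c)) ∧
    (∀ β : C → C → ℂ, IsSesqui β → IsUnitaryOnC circ β →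
      IsBilin (fun c d => β d (circ c)) ∧ IsFourierFormFn (fun c d => β d (circ c))) ∧
    (∀ ω : C → C → ℂ, IsBilin ω →
      (fun c d => (fun c' d' => ω (circ d') c') d (circ c)) = ω) ∧
    (∀ β : C → C → ℂ, IsSesqui β →
      (fun c d => (fun c' d' => β d' (circ c')) (circ d) c) = β) ∧
    (∀ ω : C → C → ℂ, IsBilin ω → IsFourierFormFn ω →
      (IsPosDefHermitian circ ω ↔ IsInnerProduct (fun c d => ω (circ d) c))) := by
  have hΔ := isComulReversing_of_repr hcanti
  refine ⟨fun ω hbil hF => ⟨hbil.isSesqui_circ hcadd hcsmul, hF.isUnitaryOnC_circ hΔ⟩,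
    fun β hsesq hU => ⟨hsesq.isBilin_circ hcadd hcsmul, hU.isFourierFormFn_circ hcinvol hΔ⟩,
    fun ω _ => ?_, fun β _ => ?_,
    fun ω _ _ => isPosDefHermitian_iff_isInnerProduct hcinvol ω⟩
  all_goals funext c d; simp only [hcinvol]
end
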